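/- Let G be a cubic simple graph with girth at least 5, let A be a MAI set of G, let B = V(G) \ A, let Y be the set of vertices of degree 1 in the induced subgraph G[A], and let Z be the set of vertices of degree 1 in G[B]. Then: (i) every vertex of Z has at most one neighbor in Y; and (ii) every vertex of Y has at most one neighbor in Z. -/

import Mathlib

/-- A set of vertices is independent if its vertices are pairwise nonadjacent. -/
def IsIndep {V : Type*} (G : SimpleGraph V) (s : Set V) : Prop :=
  s.Pairwise fun u v => ¬ G.Adj u v

/-- The independence number of a graph: the largest size of an independent set. -/
noncomputable def indepNum {V : Type*} (G : SimpleGraph V) : ℕ :=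
  sSup {n | ∃ s : Set V, IsIndep G s ∧ s.ncard = n}

/-- A graph is cubic (3-regular) if every vertex has exactly three neighbors. -/
def IsCubic {V : Type*} (G : SimpleGraph V) : Prop :=
  ∀ v : V, (G.neighborSet v).ncard = 3

/-- `A` is an AI set (almost independent set) if the subgraph induced by `A` has maximum
degree at most 1, i.e. every vertex of `A` has at most one neighbor inside `A`. -/
def IsAI {V : Type*} (G : SimpleGraph V) (A : Set V) : Prop :=
  ∀ a ∈ A, ({b | b ∈ A ∧ G.Adj a b}).ncard ≤ 1

/-- `A` is a MAI set (maximum almost independent set) if `A` is an AI set containing an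
independent set of maximum size `α(G)`, and `A` is largest among such sets. -/
def IsMAI {V : Type*} (G : SimpleGraph V) (A : Set V) : Prop :=
  IsAI G A ∧ (∃ s ⊆ A, IsIndep G s ∧ s.ncard = indepNum G) ∧
    ∀ A' : Set V, IsAI G A' → (∃ s ⊆ A', IsIndep G s ∧ s.ncard = indepNum G) →
      A'.ncard ≤ A.ncard

/-!
Inside a maximum independent set `S ⊆ A`, a vertex `y ∈ Y` can be traded for its partner `a` in
`G[A]`, because `y` is the only neighbour of `a` in `A`.

(i) The two neighbours in `A` of `z ∈ Z` are nonadjacent (no triangles); if both lay in `Y`,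
trading both out of `S` and adding `z` would give an independent set of size `α(G) + 1`.

(ii) If `y ∈ Y` had two neighbours `z₁, z₂ ∈ Z`, let `cᵢ` be the other neighbour of `zᵢ` in `A`.
By (i), `cᵢ ∉ Y`, so `cᵢ` is isolated in `G[A]`; girth at least 5 gives `z₁ ≁ z₂` and `c₁ ≠ c₂`.
Then `A - y + z₁ + z₂` is an AI set which, after trading `y`, still contains a maximum independent
set, and it is larger than `A`.
-/

open Set

namespace SimpleGraph

variable {V : Type*} {G : SimpleGraph V} {a b c d : V}

lemma not_adj_of_four_le_egirth (hg : 4 ≤ G.egirth) (hab : G.Adj a b) (hac : G.Adj a c) :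
    ¬ G.Adj b c := by
  intro hbc
  have hcyc : (Walk.cons hab (Walk.cons hbc (Walk.cons hac.symm Walk.nil))).IsCycle := by
    simp [Walk.isCycle_def, Walk.isTrail_def, hab.ne, hbc.ne, hac.ne, hab.ne', hac.ne']
  have := le_egirth.mp hg a _ hcyc
  norm_num at this

lemma eq_of_five_le_egirth (hg : 5 ≤ G.egirth) (hab : G.Adj a b) (hbc : G.Adj b c)
    (hcd : G.Adj c d) (hda : G.Adj d a) (hac : a ≠ c) : b = d := by
  by_contra hbd
  have hcyc : (Walk.cons hab (Walk.cons hbc (Walk.cons hcd (Walk.cons hda Walk.nil)))).IsCycle := by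
    simp [Walk.isCycle_def, Walk.isTrail_def, hab.ne, hbc.ne, hcd.ne, hda.ne,
      hab.ne', hda.ne', hac, hbd, Ne.symm hac]
  have := le_egirth.mp hg a _ hcyc
  norm_num at this

end SimpleGraph

lemma Set.exists_eq_pair_of_ncard_eq_two {α : Type*} {s : Set α} {x : α} (hs : s.ncard = 2)
    (hx : x ∈ s) : ∃ y, y ≠ x ∧ s = {x, y} := by
  obtain ⟨y, hy⟩ := ncard_eq_one.1 (by rw [ncard_sdiff_singleton_of_mem hx, hs] :
    (s \ {x}).ncard = 1)
  have hys : y ∈ s \ {x} := hy ▸ rfl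
  exact ⟨y, hys.2, by rw [← hy, insert_sdiff_singleton, insert_eq_of_mem hx]⟩

section

variable {V : Type*} {G : SimpleGraph V} {A S : Set V}

lemma IsIndep.insert {z : V} (hS : IsIndep G S) (hz : ∀ u ∈ S, ¬ G.Adj z u) :
    IsIndep G (insert z S) :=
  Set.Pairwise.insert hS fun u hu _ => ⟨hz u hu, fun h => hz u hu h.symm⟩

lemma IsIndep.ncard_le_indepNum [Finite V] (hS : IsIndep G S) : S.ncard ≤ indepNum G := by
  refine le_csSup ⟨Nat.card V, ?_⟩ ⟨S, hS, rfl⟩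
  rintro n ⟨T, -, rfl⟩
  simpa using ncard_le_ncard (subset_univ T)

lemma IsCubic.ncard_inter_neighborSet_eq_two [Finite V] (hG : IsCubic G) {v : V}
    (hv : (Aᶜ ∩ G.neighborSet v).ncard = 1) : (A ∩ G.neighborSet v).ncard = 2 := by
  have hdisj : Disjoint (A ∩ G.neighborSet v) (Aᶜ ∩ G.neighborSet v) :=
    disjoint_compl_right.mono inter_subset_left inter_subset_left
  have := ncard_union_eq hdisj
  rw [← union_inter_distrib_right, union_compl_self, univ_inter, hG v, hv] at this
  omega

section IsAI

variable [Finite V]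

lemma isAI_iff :
    IsAI G A ↔ ∀ a ∈ A, ∀ b ∈ A, G.Adj a b → ∀ c ∈ A, G.Adj a c → b = c := by
  refine forall₂_congr fun a _ => ?_
  simp only [ncard_le_one (toFinite _), mem_ofPred_eq, and_imp]

lemma IsAI.mono (hA : IsAI G A) {B : Set V} (hBA : B ⊆ A) : IsAI G B := by
  rw [isAI_iff] at hA ⊢
  exact fun a ha b hb hab c hc hac => hA a (hBA ha) b (hBA hb) hab c (hBA hc) hac

lemma IsAI.not_adj_of_ncard_ne_one (hA : IsAI G A) {c : V} (hc : c ∈ A)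
    (h : (A ∩ G.neighborSet c).ncard ≠ 1) : ∀ u ∈ A, ¬ G.Adj c u := by
  intro u hu hcu
  have hpos : 0 < (A ∩ G.neighborSet c).ncard := (ncard_pos (toFinite _)).2 ⟨u, hu, hcu⟩
  have hle : (A ∩ G.neighborSet c).ncard ≤ 1 := hA c hc
  omega

lemma IsAI.insert_of_isolated (hA : IsAI G A) {z c : V} (hz : ∀ u ∈ A, G.Adj z u → u = c)
    (hc : ∀ u ∈ A, ¬ G.Adj c u) : IsAI G (insert z A) := by
  rw [isAI_iff] at hA ⊢
  rintro v (rfl | hv) b (rfl | hb) hvb b' (rfl | hb') hvb'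
  · exact (G.irrefl hvb).elim
  · exact (G.irrefl hvb).elim
  · exact (G.irrefl hvb').elim
  · rw [hz b hb hvb, hz b' hb' hvb']
  · rfl
  · exact absurd hvb' (hz v hv hvb.symm ▸ hc b' hb')
  · exact absurd hvb (hz v hv hvb'.symm ▸ hc b hb)
  · exact hA v hv b hb hvb b' hb' hvb'

lemma IsAI.exists_isIndep_subset_diff (hA : IsAI G A) (hSA : S ⊆ A) (hS : IsIndep G S)
    {a y : V} (ha : a ∈ A) (hya : G.Adj y a) :
    ∃ S' ⊆ A \ {y}, IsIndep G S' ∧ S'.ncard = S.ncard := by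
  by_cases hyS : y ∈ S
  · have haS : a ∉ S := fun haS => hS hyS haS hya.ne hya
    refine ⟨insert a (S \ {y}), insert_subset ⟨ha, hya.ne'⟩ (sdiff_subset_sdiff_left hSA),
      IsIndep.insert (hS.mono sdiff_subset) fun u hu hau => hu.2 ?_, ncard_exchange haS hyS⟩
    exact isAI_iff.1 hA a ha u (hSA hu.1) hau y (hSA hyS) hya.symm
  · exact ⟨S, fun u hu => ⟨hSA hu, fun h => hyS (h ▸ hu)⟩, hS, rfl⟩

end IsAI

section MAI

variable [Finite V] {z : V}

theorem IsAI.not_inter_neighborSet_subset_pair (hAI : IsAI G A)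
    (hα : ∃ S ⊆ A, IsIndep G S ∧ S.ncard = indepNum G) (hz : z ∉ A) {y₁ y₂ a₁ a₂ : V}
    (ha₁ : a₁ ∈ A) (hya₁ : G.Adj y₁ a₁) (ha₂ : a₂ ∈ A) (hya₂ : G.Adj y₂ a₂)
    (hy₁₂ : ¬ G.Adj y₁ y₂) : ¬ A ∩ G.neighborSet z ⊆ {y₁, y₂} := by
  intro hzA
  obtain ⟨S, hSA, hS, hScard⟩ := hα
  obtain ⟨S₁, hS₁A, hS₁, hS₁card⟩ := hAI.exists_isIndep_subset_diff hSA hS ha₁ hya₁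
  have ha₂' : a₂ ∈ A \ {y₁} := ⟨ha₂, fun h => hy₁₂ (h ▸ hya₂).symm⟩
  obtain ⟨S₂, hS₂A, hS₂, hS₂card⟩ :=
    (hAI.mono sdiff_subset).exists_isIndep_subset_diff hS₁A hS₁ ha₂' hya₂
  have hzS₂ : IsIndep G (insert z S₂) := hS₂.insert fun u hu hzu => by
    obtain ⟨⟨huA, hu₁⟩, hu₂⟩ := hS₂A hu
    rcases hzA ⟨huA, hzu⟩ with rfl | rfl
    exacts [hu₁ rfl, hu₂ rfl]
  have hle := hzS₂.ncard_le_indepNum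
  rw [ncard_insert_of_notMem fun h => hz (hS₂A h).1.1, hS₂card, hS₁card, hScard] at hle
  omega

theorem IsAI.eq_of_mem_inter_neighborSet (hAI : IsAI G A)
    (hα : ∃ S ⊆ A, IsIndep G S ∧ S.ncard = indepNum G) (hG : IsCubic G) (hg : 4 ≤ G.egirth)
    (hz : z ∉ A) (hzc : (Aᶜ ∩ G.neighborSet z).ncard = 1) {y₁ y₂ : V}
    (hy₁ : y₁ ∈ A ∩ G.neighborSet z) (hy₂ : y₂ ∈ A ∩ G.neighborSet z)
    (h₁ : (A ∩ G.neighborSet y₁).ncard = 1) (h₂ : (A ∩ G.neighborSet y₂).ncard = 1) :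
    y₁ = y₂ := by
  obtain ⟨c, -, hpair⟩ :=
    exists_eq_pair_of_ncard_eq_two (hG.ncard_inter_neighborSet_eq_two hzc) hy₁
  obtain rfl | rfl : y₂ = y₁ ∨ y₂ = c := hpair.subset hy₂
  · rfl
  obtain ⟨a₁, ha₁A, hya₁⟩ := nonempty_of_ncard_ne_zero (h₁ ▸ one_ne_zero)
  obtain ⟨a₂, ha₂A, hya₂⟩ := nonempty_of_ncard_ne_zero (h₂ ▸ one_ne_zero)
  exact absurd hpair.subset <| hAI.not_inter_neighborSet_subset_pair hα hz ha₁A hya₁ ha₂A hya₂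
    (G.not_adj_of_four_le_egirth hg hy₁.2 hy₂.2)

theorem IsAI.isAI_insert_insert_sdiff (hAI : IsAI G A) {y z₁ z₂ c₁ c₂ : V}
    (hz₁₂ : ¬ G.Adj z₁ z₂) (hc₁ : A ∩ G.neighborSet z₁ ⊆ {y, c₁})
    (hc₂ : A ∩ G.neighborSet z₂ ⊆ {y, c₂}) (hc₁A : ∀ u ∈ A, ¬ G.Adj c₁ u)
    (hc₂A : ∀ u ∈ A, ¬ G.Adj c₂ u) (hz₂c₁ : ¬ G.Adj z₂ c₁) :
    IsAI G (insert z₁ (insert z₂ (A \ {y}))) := by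
  have hnbr : ∀ {z c}, A ∩ G.neighborSet z ⊆ {y, c} → ∀ u ∈ A \ {y}, G.Adj z u → u = c :=
    fun hc u hu hzu => (hc ⟨hu.1, hzu⟩).resolve_left hu.2
  have hAI₂ : IsAI G (insert z₂ (A \ {y})) :=
    (hAI.mono sdiff_subset).insert_of_isolated (hnbr hc₂) fun u hu => hc₂A u hu.1
  refine hAI₂.insert_of_isolated (c := c₁) ?_ ?_
  · rintro u (rfl | hu) hzu
    exacts [absurd hzu hz₁₂, hnbr hc₁ u hu hzu]
  · rintro u (rfl | hu) hcu
    exacts [hz₂c₁ hcu.symm, hc₁A u hu.1 hcu]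

theorem IsMAI.not_isAI_insert_insert_sdiff (hA : IsMAI G A) {y a z₁ z₂ : V} (ha : a ∈ A)
    (hya : G.Adj y a) (hz₁ : z₁ ∉ A) (hz₂ : z₂ ∉ A) (hne : z₁ ≠ z₂) :
    ¬ IsAI G (insert z₁ (insert z₂ (A \ {y}))) := by
  intro hA'
  obtain ⟨hAI, ⟨S, hSA, hS, hScard⟩, hmax⟩ := hA
  obtain ⟨S', hS'A, hS', hS'card⟩ := hAI.exists_isIndep_subset_diff hSA hS ha hya
  have hle := hmax _ hA' ⟨S', hS'A.trans ((subset_insert _ _).trans (subset_insert _ _)), hS',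
    hS'card.trans hScard⟩
  rw [ncard_insert_of_notMem (by rintro (h | h); exacts [hne h, hz₁ h.1]),
    ncard_insert_of_notMem fun h => hz₂ h.1] at hle
  have := pred_ncard_le_ncard_sdiff_singleton A y
  omega

theorem IsMAI.eq_of_adj_of_adj (hA : IsMAI G A) (hG : IsCubic G) (hg : 5 ≤ G.egirth)
    {y z₁ z₂ : V} (hy : y ∈ A) (hy₁ : (A ∩ G.neighborSet y).ncard = 1) (hz₁ : z₁ ∉ A)
    (hz₁c : (Aᶜ ∩ G.neighborSet z₁).ncard = 1) (hz₂ : z₂ ∉ A)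
    (hz₂c : (Aᶜ ∩ G.neighborSet z₂).ncard = 1) (hyz₁ : G.Adj y z₁) (hyz₂ : G.Adj y z₂) :
    z₁ = z₂ := by
  by_contra hne
  have hg4 : 4 ≤ G.egirth := le_trans (by norm_num) hg
  obtain ⟨a, ha, hya⟩ := nonempty_of_ncard_ne_zero (hy₁ ▸ one_ne_zero)
  have exists_partner : ∀ {z}, z ∉ A → (Aᶜ ∩ G.neighborSet z).ncard = 1 → G.Adj y z →
      ∃ c, c ≠ y ∧ A ∩ G.neighborSet z = {y, c} ∧ G.Adj z c ∧ ∀ u ∈ A, ¬ G.Adj c u := by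
    intro z hz hzc hyz
    obtain ⟨c, hcy, hpair⟩ :=
      exists_eq_pair_of_ncard_eq_two (hG.ncard_inter_neighborSet_eq_two hzc) ⟨hy, hyz.symm⟩
    have hc : c ∈ A ∩ G.neighborSet z := hpair ▸ mem_insert_of_mem _ rfl
    refine ⟨c, hcy, hpair, hc.2, hA.1.not_adj_of_ncard_ne_one hc.1 fun h => hcy ?_⟩
    exact hA.1.eq_of_mem_inter_neighborSet hA.2.1 hG hg4 hz hzc hc ⟨hy, hyz.symm⟩ h hy₁
  obtain ⟨c₁, hc₁y, hpair₁, hz₁c₁, hc₁A⟩ := exists_partner hz₁ hz₁c hyz₁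
  obtain ⟨c₂, hc₂y, hpair₂, hz₂c₂, hc₂A⟩ := exists_partner hz₂ hz₂c hyz₂
  have hc₁₂ : c₁ ≠ c₂ := fun h =>
    hne (G.eq_of_five_le_egirth hg hyz₁ hz₁c₁ (h ▸ hz₂c₂.symm) hyz₂.symm hc₁y.symm)
  have hz₂c₁ : ¬ G.Adj z₂ c₁ := fun h =>
    (hpair₂.subset ⟨(hpair₁.superset (mem_insert_of_mem _ rfl)).1, h⟩).elim hc₁y hc₁₂
  exact hA.not_isAI_insert_insert_sdiff ha hya hz₁ hz₂ hne <|
    hA.1.isAI_insert_insert_sdiff (G.not_adj_of_four_le_egirth hg4 hyz₁ hyz₂)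
      hpair₁.subset hpair₂.subset hc₁A hc₂A hz₂c₁

end MAI

end

/-- let `G` be a cubic graph with girth at least 5, `A` a MAI set, `B = Aᶜ`,
`Y` the degree-1 vertices of `G[A]` and `Z` the degree-1 vertices of `G[B]`. Then every
vertex of `Z` has at most one neighbor in `Y`, and every vertex of `Y` has at most one
neighbor in `Z`. -/
theorem YZ_matching {V : Type*} [Fintype V] (G : SimpleGraph V)
    (hcubic : IsCubic G) (hgirth : 5 ≤ G.egirth)
    (A : Set V) (hA : IsMAI G A) (Y Z : Set V)
    (hY : Y = {a ∈ A | ({b | b ∈ A ∧ G.Adj a b}).ncard = 1})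
    (hZ : Z = {a ∈ Aᶜ | ({b | b ∈ Aᶜ ∧ G.Adj a b}).ncard = 1}) :
    (∀ z ∈ Z, ({y | y ∈ Y ∧ G.Adj z y}).ncard ≤ 1) ∧
      (∀ y ∈ Y, ({z | z ∈ Z ∧ G.Adj y z}).ncard ≤ 1) := by
  subst hY hZ
  refine ⟨fun z ⟨hzA, hzc⟩ => (ncard_le_one (toFinite _)).2 ?_,
    fun y ⟨hyA, hyc⟩ => (ncard_le_one (toFinite _)).2 ?_⟩
  · rintro y₁ ⟨⟨hy₁A, h₁⟩, hzy₁⟩ y₂ ⟨⟨hy₂A, h₂⟩, hzy₂⟩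
    exact hA.1.eq_of_mem_inter_neighborSet hA.2.1 hcubic (le_trans (by norm_num) hgirth) hzA hzc
      ⟨hy₁A, hzy₁⟩ ⟨hy₂A, hzy₂⟩ h₁ h₂
  · rintro z₁ ⟨⟨hz₁A, hz₁c⟩, hyz₁⟩ z₂ ⟨⟨hz₂A, hz₂c⟩, hyz₂⟩
    exact hA.eq_of_adj_of_adj hcubic hgirth hyA hyc hz₁A hz₁c hz₂A hz₂c hyz₁ hyz₂
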